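/- Let X be an irregular minimal 3-fold of general type over an algebraically closed field of characteristic zero whose Albanese dimension is one, let f: X → B be the Stein factorization of the Albanese map with general fiber F not a (1,2)-surface. Assume the slope inequality K_{X/B}^3 ≥ 2 deg f_*ω_{X/B}, the inequality deg f_*ω_{X/B} ≥ χ(X, ω_X) − χ(B, ω_B)χ(F, ω_F), and K_{X/B}^3 = K_X^3 − 6K_F^2·χ(B, ω_B). Then K_X^3 ≥ 2χ(X, ω_X) + 2(3K_F^2 − χ(F, ω_F))χ(B, ω_B), and since 3K_F^2 > χ(F, ω_F) for any minimal surface of general type that is not a (1,2)-surface, K_X^3 ≥ 2χ(X, ω_X); equality forces g(B) = 1 and h^1(X, O_X) = 1. -/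
import Mathlib


/-- Proof of Theorem 1.8 (the Noether–Severi type inequality).  Let `X` be an
irregular minimal 3-fold of general type over an algebraically closed field of
characteristic zero, of Albanese dimension one, and `f : X → B` the Stein
factorization of its Albanese map, with general fiber `F` not a
`(1,2)`-surface.  Assuming the slope inequality `K_{X/B}³ ≥ 2·deg f_*ω_{X/B}`,
the inequality `deg f_*ω_{X/B} ≥ χ(X,ω_X) − χ(B,ω_B)·χ(F,ω_F)`, and
`K_{X/B}³ = K_X³ − 6K_F²·χ(B,ω_B)`, one gets
`K_X³ ≥ 2χ(X,ω_X) + 2(3K_F² − χ(F,ω_F))·χ(B,ω_B)`, and since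
`3K_F² > χ(F,ω_F)` for minimal surfaces of general type not of type `(1,2)`,
`K_X³ ≥ 2χ(X,ω_X)`; equality forces `g(B) = 1` and `h¹(X,O_X) = 1`. -/
theorem noether_severi_inequality
    (KX3 KXB3 : ℤ)                  -- K_X³ and K_{X/B}³
    (degfomega : ℤ)                 -- deg f_*ω_{X/B}
    (chiX chiB chiF : ℤ)            -- χ(X,ω_X), χ(B,ω_B), χ(F,ω_F)
    (KF2 : ℤ)                       -- K_F²
    (gB : ℤ)                        -- genus of B
    (q : ℤ)                         -- irregularity h¹(X, O_X)
    (Irregular MinimalOfGeneralType AlbaneseDimensionOne FiberNot12 : Prop)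
    (hirr : Irregular) (hmin : MinimalOfGeneralType)
    (halb : AlbaneseDimensionOne) (hF : FiberNot12)
    (hKF2 : 1 ≤ KF2)
    (hslope : KXB3 ≥ 2 * degfomega)
    (hdeg : degfomega ≥ chiX - chiB * chiF)
    (hKXB : KXB3 = KX3 - 6 * KF2 * chiB)
    (hchiB : chiB = gB - 1)
    (hgB : 1 ≤ gB)                  -- g(B) ≥ h¹(X,O_X) > 0 since X is irregular
    (hq : 1 ≤ q) (hqg : q ≤ gB)
    (h3K : 3 * KF2 > chiF) :        -- holds since F is not a (1,2)-surface
    KX3 ≥ 2 * chiX + 2 * (3 * KF2 - chiF) * chiB ∧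
      KX3 ≥ 2 * chiX ∧
      (KX3 = 2 * chiX → gB = 1 ∧ q = 1) := by
  have h1 : KX3 ≥ 2 * chiX + 2 * (3 * KF2 - chiF) * chiB := by nlinarith
  have hchiB0 : 0 ≤ chiB := by omega
  have h2 : KX3 ≥ 2 * chiX := by nlinarith
  refine ⟨h1, h2, fun he => ?_⟩
  have : chiB = 0 := by nlinarith
  omega
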